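/- arXiv:2203.12001 — 4 statements merged into one kernel-verified Lean document; each statement's English description precedes it below -/
import Mathlib

section
/- Let I ⊆ ℝ be an open interval, let w : I → ℝ be differentiable, and let u : ℝ → ℝ be twice differentiable with u'(y) > 0 and u''(y) > 0 for all y ∈ ℝ. Let E, D, R : I → ℝ be differentiable, let α ∈ ℝ and β > 0. Assume that for every ξ ∈ I: (i) the first-order optimality condition −1/u'(w(ξ)) = E(ξ)·(α + β·R(ξ)) + β·D(ξ) holds; (ii) D'(ξ) ≥ 0 (severe loss avoidance, condition C2); and (iii) the derivative with respect to ξ of ξ ↦ E(ξ)·(α + β·R(ξ)) is nonnegative (risk-sensitive monotone likelihood ratio property, condition C3). Then w'(ξ) ≥ 0 for all ξ ∈ I, i.e., the optimal coverage plan is increasing in the cyber risk. -/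
/-- On an open interval `I = Set.Ioo a b`, if the pointwise first-order
optimality condition `-1 / u'(w ξ) = E ξ * (α + β * R ξ) + β * D ξ` holds, where `u` is
twice differentiable with `u' > 0` and `u'' > 0` (loss aversion), `β > 0`, and conditions
(C2) `D' ≥ 0` (severe loss avoidance) and (C3) monotonicity of `ξ ↦ E ξ * (α + β * R ξ)`
(risk-sensitive monotone likelihood ratio property) hold, then the optimal coverage plan
`w` is increasing in the cyber risk: `w' ≥ 0` on `I`. -/
theorem optimal_coverage_monotone
    (a b : ℝ) (w u E D R : ℝ → ℝ) (α β : ℝ)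
    (hw : ∀ ξ ∈ Set.Ioo a b, DifferentiableAt ℝ w ξ)
    (hu : Differentiable ℝ u)
    (hu' : Differentiable ℝ (deriv u))
    (hu'pos : ∀ y : ℝ, 0 < deriv u y)
    (hu''pos : ∀ y : ℝ, 0 < deriv (deriv u) y)
    (hE : ∀ ξ ∈ Set.Ioo a b, DifferentiableAt ℝ E ξ)
    (hD : ∀ ξ ∈ Set.Ioo a b, DifferentiableAt ℝ D ξ)
    (hR : ∀ ξ ∈ Set.Ioo a b, DifferentiableAt ℝ R ξ)
    (hβ : 0 < β)
    (hfoc : ∀ ξ ∈ Set.Ioo a b,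
      -1 / deriv u (w ξ) = E ξ * (α + β * R ξ) + β * D ξ)
    (hC2 : ∀ ξ ∈ Set.Ioo a b, 0 ≤ deriv D ξ)
    (hC3 : ∀ ξ ∈ Set.Ioo a b, 0 ≤ deriv (fun t => E t * (α + β * R t)) ξ) :
    ∀ ξ ∈ Set.Ioo a b, 0 ≤ deriv w ξ := by
  intro ξ hξ
  -- LHS derivative
  have hwd := hw ξ hξ
  have hud : HasDerivAt (fun t => deriv u (w t))
      (deriv (deriv u) (w ξ) * deriv w ξ) ξ :=
    ((hu' (w ξ)).hasDerivAt).comp ξ hwd.hasDerivAt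
  have hne : deriv u (w ξ) ≠ 0 := ne_of_gt (hu'pos _)
  have hL : HasDerivAt (fun t => -1 / deriv u (w t))
      (deriv (deriv u) (w ξ) * deriv w ξ / (deriv u (w ξ))^2) ξ := by
    have := (hud.inv hne).neg
    simpa [Pi.neg_def, Pi.inv_def, neg_div, div_eq_mul_inv, neg_neg, mul_comm, mul_left_comm, mul_assoc]
      using this
  -- RHS derivative
  have hRHSd : HasDerivAt (fun t => E t * (α + β * R t) + β * D t)
      (deriv (fun t => E t * (α + β * R t)) ξ + β * deriv D ξ) ξ := by
    have h1 : DifferentiableAt ℝ (fun t => E t * (α + β * R t)) ξ :=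
      (hE ξ hξ).mul ((differentiableAt_const _).add
        ((differentiableAt_const _).mul (hR ξ hξ)))
    exact h1.hasDerivAt.add (((hD ξ hξ).hasDerivAt).const_mul β)
  -- functions agree on a neighborhood
  have heq : (fun t => -1 / deriv u (w t)) =ᶠ[nhds ξ]
      (fun t => E t * (α + β * R t) + β * D t) := by
    filter_upwards [isOpen_Ioo.mem_nhds hξ] with t ht
    exact hfoc t ht
  have hderiv_eq : deriv (deriv u) (w ξ) * deriv w ξ / (deriv u (w ξ))^2
      = deriv (fun t => E t * (α + β * R t)) ξ + β * deriv D ξ := by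
    have hL' : HasDerivAt (fun t => E t * (α + β * R t) + β * D t)
        (deriv (deriv u) (w ξ) * deriv w ξ / (deriv u (w ξ))^2) ξ :=
      hL.congr_of_eventuallyEq heq.symm
    exact hL'.unique hRHSd
  have hRHSnonneg : 0 ≤ deriv (fun t => E t * (α + β * R t)) ξ + β * deriv D ξ :=
    add_nonneg (hC3 ξ hξ) (mul_nonneg hβ.le (hC2 ξ hξ))
  have hkey : 0 ≤ deriv (deriv u) (w ξ) * deriv w ξ / (deriv u (w ξ))^2 :=
    hderiv_eq ▸ hRHSnonneg
  have hsq : 0 < (deriv u (w ξ))^2 := pow_pos (hu'pos _) 2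
  have h1 : 0 ≤ deriv (deriv u) (w ξ) * deriv w ξ :=
    (div_nonneg_iff.mp hkey).resolve_right (fun h => absurd h.2 (not_le.mpr hsq)) |>.1
  nlinarith [hu''pos (w ξ)]
end

section
/- Let I ⊆ ℝ be an open interval, let w : I → ℝ be differentiable, and let u : ℝ → ℝ be twice differentiable with u'(y) > 0 and u''(y) > 0 for all y ∈ ℝ. Let R : I → ℝ be differentiable, let E ≥ 0 and D be real constants, let α ∈ ℝ and β > 0. Assume that for every ξ ∈ I the first-order optimality condition −1/u'(w(ξ)) = E·(α + β·R(ξ)) + β·D holds, and that R'(ξ) ≥ 0 for all ξ ∈ I (the standard monotone likelihood ratio property). Then w'(ξ) ≥ 0 for all ξ ∈ I. -/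
/-- On an open interval `I = Set.Ioo a b`, if the pointwise first-order
optimality condition `-1 / u'(w ξ) = E * (α + β * R ξ) + β * D` holds with *constant*
`E ≥ 0` and `D` (as for coherent risk measures with piecewise-constant dual densities),
`u` twice differentiable with `u' > 0`, `u'' > 0`, `β > 0`, and `R' ≥ 0` (the standard
monotone likelihood ratio property), then the coverage plan is increasing: `w' ≥ 0` on `I`. -/
theorem optimal_coverage_monotone_constant_density
    (a b : ℝ) (w u R : ℝ → ℝ) (E D α β : ℝ)
    (hw : ∀ ξ ∈ Set.Ioo a b, DifferentiableAt ℝ w ξ)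
    (hu : Differentiable ℝ u)
    (hu' : Differentiable ℝ (deriv u))
    (hu'pos : ∀ y : ℝ, 0 < deriv u y)
    (hu''pos : ∀ y : ℝ, 0 < deriv (deriv u) y)
    (hR : ∀ ξ ∈ Set.Ioo a b, DifferentiableAt ℝ R ξ)
    (hE : 0 ≤ E)
    (hβ : 0 < β)
    (hfoc : ∀ ξ ∈ Set.Ioo a b,
      -1 / deriv u (w ξ) = E * (α + β * R ξ) + β * D)
    (hMLR : ∀ ξ ∈ Set.Ioo a b, 0 ≤ deriv R ξ) :
    ∀ ξ ∈ Set.Ioo a b, 0 ≤ deriv w ξ := by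
  intro ξ hξ
  have hne : deriv u (w ξ) ≠ 0 := ne_of_gt (hu'pos (w ξ))
  -- derivative of x ↦ deriv u (w x) at ξ
  have hh : HasDerivAt (fun x => deriv u (w x))
      (deriv (deriv u) (w ξ) * deriv w ξ) ξ :=
    (hu' (w ξ)).hasDerivAt.comp ξ (hw ξ hξ).hasDerivAt
  have hL : HasDerivAt (fun x => -1 / deriv u (w x))
      (deriv (deriv u) (w ξ) * deriv w ξ / (deriv u (w ξ)) ^ 2) ξ := by
    have h1 : HasDerivAt (fun x => (deriv u (w x))⁻¹)
        (-(deriv (deriv u) (w ξ) * deriv w ξ) / (deriv u (w ξ)) ^ 2) ξ :=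
      hh.inv hne
    have h2 : HasDerivAt (fun x => -(deriv u (w x))⁻¹)
        (-(-(deriv (deriv u) (w ξ) * deriv w ξ) / (deriv u (w ξ)) ^ 2)) ξ := h1.neg
    have : (fun x => -(deriv u (w x))⁻¹) = fun x => -1 / deriv u (w x) := by
      funext x; rw [neg_div, one_div]
    rw [this] at h2
    convert h2 using 1
    field_simp
  have hRd : HasDerivAt (fun x => E * (α + β * R x) + β * D)
      (E * (β * deriv R ξ)) ξ := by
    exact ((((hR ξ hξ).hasDerivAt.const_mul β).const_add α).const_mul E).add_const (β * D)
  -- the two functions agree on a neighborhood of ξ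
  have heq : (fun x => -1 / deriv u (w x)) =ᶠ[nhds ξ]
      (fun x => E * (α + β * R x) + β * D) :=
    Filter.eventually_of_mem (isOpen_Ioo.mem_nhds hξ) (fun x hx => hfoc x hx)
  have hderiv_eq : deriv (fun x => -1 / deriv u (w x)) ξ
      = deriv (fun x => E * (α + β * R x) + β * D) ξ := heq.deriv_eq
  rw [hL.deriv, hRd.deriv] at hderiv_eq
  have h1 : 0 < deriv (deriv u) (w ξ) := hu''pos (w ξ)
  have h2 : 0 < (deriv u (w ξ)) ^ 2 := by positivity
  have h3 : 0 ≤ E * (β * deriv R ξ) :=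
    mul_nonneg hE (mul_nonneg hβ.le (hMLR ξ hξ))
  have h5 : deriv (deriv u) (w ξ) * deriv w ξ
      = E * (β * deriv R ξ) * (deriv u (w ξ)) ^ 2 := by
    field_simp at hderiv_eq
    linarith
  nlinarith [mul_nonneg h3 h2.le]
end

section
/- Let T : ℝⁿ → ℝ be differentiable at μ̄ ∈ ℝⁿ with ∇T(μ̄) ≠ 0. Let B ⊆ ℝⁿ be a nonempty compact set, μ⁰ ∈ ℝⁿ, and define f(μ) = max_{b ∈ B} ⟨b, μ − μ⁰⟩; suppose b* ∈ B is the unique maximizer of b ↦ ⟨b, μ̄ − μ⁰⟩ over B and b* ≠ 0. If there exists no a > 0 with ∇T(μ̄) = −a·b*, then there exist a direction Δμ ∈ ℝⁿ and c₀ > 0 such that for all c ∈ (0, c₀), both T(μ̄ + c·Δμ) < T(μ̄) and f(μ̄ + c·Δμ) < f(μ̄); that is, the type distribution can be changed so that both the intensity of moral hazard and the insurer's manipulation cost strictly decrease. -/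
open scoped RealInnerProductSpace

open scoped RealInnerProductSpace

lemma exists_joint_descent_dir {n : ℕ} (g b : Fin n → ℝ) (hg : g ≠ 0) (hb : b ≠ 0)
    (hprop : ¬ ∃ a : ℝ, 0 < a ∧ g = -(a • b)) :
    ∃ Δ : Fin n → ℝ, (∑ i, g i * Δ i) < 0 ∧ (∑ i, b i * Δ i) < 0 := by
  classical
  set g' : EuclideanSpace ℝ (Fin n) := WithLp.toLp 2 g with hg'
  set b' : EuclideanSpace ℝ (Fin n) := WithLp.toLp 2 b with hb'
  have hip : ∀ x y : EuclideanSpace ℝ (Fin n), ⟪x, y⟫ = ∑ i, x i * y i := by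
    intro x y
    simp [PiLp.inner_apply, RCLike.inner_apply, mul_comm]
  have hg0 : (0:ℝ) < ‖g'‖ := norm_pos_iff.mpr (by simpa [hg'] using hg)
  have hb0 : (0:ℝ) < ‖b'‖ := norm_pos_iff.mpr (by simpa [hb'] using hb)
  have hcs : -(‖g'‖ * ‖b'‖) ≤ ⟪g', b'⟫ := by
    have := abs_real_inner_le_norm g' b'
    have := neg_abs_le (⟪g', b'⟫ : ℝ)
    linarith
  have hstrict : -(‖g'‖ * ‖b'‖) < ⟪g', b'⟫ := by
    rcases lt_or_eq_of_le hcs with h | h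
    · exact h
    · exfalso
      have heq : ⟪g', -b'⟫ = ‖g'‖ * ‖-b'‖ := by
        rw [inner_neg_right, norm_neg, ← h]; ring
      have h1 := inner_eq_norm_mul_iff_real.mp heq
      rw [norm_neg] at h1
      apply hprop
      refine ⟨‖g'‖ / ‖b'‖, div_pos hg0 hb0, ?_⟩
      have h3 : ‖b'‖ • g' = -( ‖g'‖ • b') := by
        rw [h1, smul_neg]
      have h2 := congrArg (fun z => (‖b'‖)⁻¹ • z) h3
      simp only [smul_neg, smul_smul] at h2
      rw [inv_mul_cancel₀ (ne_of_gt hb0), one_smul] at h2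
      rw [div_eq_inv_mul]
      exact congrArg WithLp.ofLp h2
  set t : ℝ := ⟪g', b'⟫ with ht
  have hgbsum : (∑ i, g i * b i) = t := (hip g' b').symm
  have hggsum : (∑ i, g i * g i) = ‖g'‖ * ‖g'‖ := by
    rw [← real_inner_self_eq_norm_mul_norm g']; exact (hip g' g').symm
  have hbbsum : (∑ i, b i * b i) = ‖b'‖ * ‖b'‖ := by
    rw [← real_inner_self_eq_norm_mul_norm b']; exact (hip b' b').symm
  have hbgsum : (∑ i, b i * g i) = t := by
    rw [← hgbsum]; apply Finset.sum_congr rfl; intro i _; ring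
  refine ⟨-(‖b'‖ • g + ‖g'‖ • b), ?_, ?_⟩
  · have key : (∑ i, g i * (-(‖b'‖ • g + ‖g'‖ • b)) i)
        = -(‖b'‖ * ∑ i, g i * g i + ‖g'‖ * ∑ i, g i * b i) := by
      rw [Finset.mul_sum, Finset.mul_sum, ← Finset.sum_add_distrib, ← Finset.sum_neg_distrib]
      apply Finset.sum_congr rfl
      intro i _
      simp only [Pi.neg_apply, Pi.add_apply, Pi.smul_apply, smul_eq_mul]
      ring
    rw [key, hggsum, hgbsum]
    nlinarith
  · have key : (∑ i, b i * (-(‖b'‖ • g + ‖g'‖ • b)) i)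
        = -(‖b'‖ * ∑ i, b i * g i + ‖g'‖ * ∑ i, b i * b i) := by
      rw [Finset.mul_sum, Finset.mul_sum, ← Finset.sum_add_distrib, ← Finset.sum_neg_distrib]
      apply Finset.sum_congr rfl
      intro i _
      simp only [Pi.neg_apply, Pi.add_apply, Pi.smul_apply, smul_eq_mul]
      ring
    rw [key, hbgsum, hbbsum]
    nlinarith


/-- The Kantorovich–Rubinstein-type dual cost `f(μ) = max_{b ∈ B} ⟨b, μ - μ⁰⟩`,
written with `sSup` over the image of `B`. -/
noncomputable def dualWassersteinCost {n : ℕ} (B : Set (Fin n → ℝ))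
    (μ0 μ : Fin n → ℝ) : ℝ :=
  sSup ((fun b => ∑ i, b i * (μ i - μ0 i)) '' B)

/-- revenue-compatible mitigation of moral hazard. If the gradient
`∇T(μbar)` of the IMH (represented coordinatewise by `fun i => fderiv ℝ T μbar (Pi.single i 1)`)
is nonzero and not negatively proportional to the unique maximizer `bstar ≠ 0` of
`b ↦ ⟨b, μbar - μ0⟩` over the nonempty compact set `B`, then there is a direction `Δμ`
along which both the IMH `T` and the manipulation cost `f` strictly decrease for all
sufficiently small step sizes. -/
theorem joint_descent_of_imh_and_cost {n : ℕ}
    (T : (Fin n → ℝ) → ℝ) (μbar : Fin n → ℝ)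
    (hT : DifferentiableAt ℝ T μbar)
    (hgrad : (fun i => fderiv ℝ T μbar (Pi.single i 1)) ≠ (0 : Fin n → ℝ))
    (B : Set (Fin n → ℝ)) (hBne : B.Nonempty) (hBc : IsCompact B)
    (μ0 bstar : Fin n → ℝ)
    (hbB : bstar ∈ B) (hbne : bstar ≠ 0)
    (hmax : ∀ b ∈ B, ∑ i, b i * (μbar i - μ0 i) ≤ ∑ i, bstar i * (μbar i - μ0 i))
    (huniq : ∀ b ∈ B, (∑ i, b i * (μbar i - μ0 i) = ∑ i, bstar i * (μbar i - μ0 i)) →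
      b = bstar)
    (hprop : ¬ ∃ a : ℝ, 0 < a ∧
      (fun i => fderiv ℝ T μbar (Pi.single i 1)) = -(a • bstar)) :
    ∃ (Δμ : Fin n → ℝ) (c₀ : ℝ), 0 < c₀ ∧ ∀ c : ℝ, 0 < c → c < c₀ →
      T (μbar + c • Δμ) < T μbar ∧
      dualWassersteinCost B μ0 (μbar + c • Δμ) < dualWassersteinCost B μ0 μbar := by
  simp only [dualWassersteinCost]
  classical
  set g : Fin n → ℝ := fun i => fderiv ℝ T μbar (Pi.single i 1) with hgdef
  obtain ⟨Δ, hgΔ, hbΔ⟩ := exists_joint_descent_dir g bstar hgrad hbne hprop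
  -- the value of the derivative along Δ
  have hL : fderiv ℝ T μbar Δ = ∑ i, g i * Δ i := by
    have hΔ : Δ = ∑ i, Pi.single i (Δ i) := (Finset.univ_sum_single Δ).symm
    conv_lhs => rw [hΔ]
    rw [map_sum]
    apply Finset.sum_congr rfl
    intro i _
    have hsingle : Pi.single i (Δ i) = Δ i • (Pi.single i (1:ℝ) : Fin n → ℝ) := by
      ext j
      simp [Pi.single_apply]
    rw [hsingle, map_smul]
    simp [hgdef, mul_comm]
  -- T part
  set φ : ℝ → ℝ := fun c => T (μbar + c • Δ) with hφdef
  have hφ : HasDerivAt φ (fderiv ℝ T μbar Δ) 0 := by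
    have h1 : HasDerivAt (fun c : ℝ => μbar + c • Δ) Δ 0 := by
      simpa using ((hasDerivAt_id (0:ℝ)).smul_const Δ).const_add μbar
    have h2 : HasFDerivAt T (fderiv ℝ T μbar) ((fun c : ℝ => μbar + c • Δ) 0) := by
      simpa using hT.hasFDerivAt
    exact h2.comp_hasDerivAt (0:ℝ) h1
  have hneg : fderiv ℝ T μbar Δ < 0 := by rw [hL]; exact hgΔ
  have hslope := (hasDerivAt_iff_tendsto_slope.mp hφ) (Iio_mem_nhds hneg)
  have hslope' : ∀ᶠ c in nhdsWithin (0:ℝ) (Set.Ioi 0), slope φ 0 c < 0 :=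
    (nhdsWithin_mono (0:ℝ) (fun x hx => ne_of_gt hx)) hslope
  have hTpart : ∀ᶠ c in nhdsWithin (0:ℝ) (Set.Ioi 0), φ c < φ 0 := by
    filter_upwards [hslope', self_mem_nhdsWithin] with c hc hc0
    have hc0' : (0:ℝ) < c := hc0
    rw [slope_def_field] at hc
    have : (φ c - φ 0) / (c - 0) < 0 := by
      simpa [div_eq_inv_mul] using hc
    rw [sub_zero] at this
    rcases div_neg_iff.mp this with ⟨h1, h2⟩ | ⟨h1, h2⟩ <;> linarith
  obtain ⟨u, hu, hsub⟩ := mem_nhdsGT_iff_exists_Ioo_subset.mp hTpart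
  -- f part
  set h : (Fin n → ℝ) → ℝ := fun b => ∑ i, b i * (μbar i - μ0 i) with hhdef
  set p : (Fin n → ℝ) → ℝ := fun b => ∑ i, b i * Δ i with hpdef
  have hmax' : ∀ b ∈ B, h b ≤ h bstar := hmax
  have huniq' : ∀ b ∈ B, h b = h bstar → b = bstar := huniq
  have hps : p bstar < 0 := hbΔ
  have hpc : Continuous p := continuous_finset_sum _ (fun i _ => (continuous_apply i).mul continuous_const)
  have hhc : Continuous h := continuous_finset_sum _ (fun i _ => (continuous_apply i).mul continuous_const)
  obtain ⟨bM, hbM, hM⟩ := hBc.exists_isMaxOn hBne hpc.continuousOn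
  set M : ℝ := |p bM| + 1 with hMdef
  have hM0 : 0 < M := by positivity
  have hMb : ∀ b ∈ B, p b ≤ M := by
    intro b hb
    have h4 : p b ≤ p bM := hM hb
    have h5 := le_abs_self (p bM)
    simp only [hMdef]
    linarith
  have hδex : ∃ δ : ℝ, 0 < δ ∧ ∀ b ∈ B, p bstar / 2 ≤ p b → h b ≤ h bstar - δ := by
    by_cases hS : (B ∩ {b | p bstar / 2 ≤ p b}).Nonempty
    · have hScpt : IsCompact (B ∩ {b | p bstar / 2 ≤ p b}) :=
        hBc.inter_right (isClosed_le continuous_const hpc)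
      obtain ⟨b₁, hb₁, hb₁max⟩ := hScpt.exists_isMaxOn hS hhc.continuousOn
      refine ⟨h bstar - h b₁, ?_, ?_⟩
      · have hle : h b₁ ≤ h bstar := hmax' b₁ hb₁.1
        rcases lt_or_eq_of_le hle with h' | h'
        · linarith
        · exfalso
          have heq := huniq' b₁ hb₁.1 h'
          have h2 : p bstar / 2 ≤ p bstar := heq ▸ hb₁.2
          linarith
      · intro b hb hpb
        have h4 : h b ≤ h b₁ := hb₁max ⟨hb, hpb⟩
        linarith
    · exact ⟨1, one_pos, fun b hb hpb => absurd ⟨b, hb, hpb⟩ hS⟩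
  obtain ⟨δ, hδ0, hδb⟩ := hδex
  have hbdd : BddAbove (h '' B) := by
    refine ⟨h bstar, ?_⟩
    rintro x ⟨b, hb, rfl⟩
    exact hmax' b hb
  have hsup0 : sSup (h '' B) = h bstar :=
    le_antisymm (csSup_le (hBne.image h) (by rintro x ⟨b, hb, rfl⟩; exact hmax' b hb))
      (le_csSup hbdd ⟨bstar, hbB, rfl⟩)
  refine ⟨Δ, min u (δ / (2 * M)), lt_min hu (by positivity), ?_⟩
  intro c hc hcu
  constructor
  · have hφ0 : φ 0 = T μbar := by simp [hφdef]
    have h5 := hsub ⟨hc, lt_of_lt_of_le hcu (min_le_left _ _)⟩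
    simp only [Set.mem_setOf_eq] at h5
    rw [hφ0] at h5
    exact h5
  · have hc2 : c < δ / (2 * M) := lt_of_lt_of_le hcu (min_le_right _ _)
    have hval : ∀ b : Fin n → ℝ, (∑ i, b i * ((μbar + c • Δ) i - μ0 i)) = h b + c * p b := by
      intro b
      have hterm : ∀ i, b i * ((μbar + c • Δ) i - μ0 i)
          = b i * (μbar i - μ0 i) + c * (b i * Δ i) := by
        intro i
        simp only [Pi.add_apply, Pi.smul_apply, smul_eq_mul]
        ring
      rw [Finset.sum_congr rfl (fun i _ => hterm i), Finset.sum_add_distrib, ← Finset.mul_sum]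
    set K := max (h bstar - δ / 2) (h bstar + c * (p bstar / 2)) with hKdef
    have hub : ∀ x ∈ (fun b => ∑ i, b i * ((μbar + c • Δ) i - μ0 i)) '' B, x ≤ K := by
      rintro x ⟨b, hb, rfl⟩
      simp only
      rw [hval b]
      by_cases hcase : p bstar / 2 ≤ p b
      · have h1 := hδb b hb hcase
        have h2 : c * p b ≤ c * M := mul_le_mul_of_nonneg_left (hMb b hb) (le_of_lt hc)
        have h3 : c * M < δ / 2 := by
          have := mul_lt_mul_of_pos_right hc2 hM0
          calc c * M < δ / (2 * M) * M := this
            _ = δ / 2 := by field_simp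
        refine le_trans ?_ (le_max_left _ _)
        calc h b + c * p b ≤ (h bstar - δ) + c * M := add_le_add h1 h2
          _ ≤ h bstar - δ / 2 := by linarith
      · push_neg at hcase
        have h1 := hmax' b hb
        have h2 : c * p b ≤ c * (p bstar / 2) :=
          mul_le_mul_of_nonneg_left (le_of_lt hcase) (le_of_lt hc)
        exact le_trans (by linarith) (le_max_right _ _)
    have hKlt : K < h bstar := by
      apply max_lt
      · linarith
      · nlinarith
    rw [hsup0]
    calc sSup ((fun b => ∑ i, b i * ((μbar + c • Δ) i - μ0 i)) '' B)
        ≤ K := csSup_le (hBne.image _) hub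
      _ < h bstar := hKlt
end

section
/- In the ransomware case study, let κ > 0, μ₂ ∈ [0, 1], c ∈ (0, 1), p ≥ 0, m > 0 and x_L < x_H. Define the insured user's perceived cost under investment x ∈ {x_L, x_H} as Ũ(x) = (1 − μ₂)·E_q[(1−c)²ξ² + m x + p] + μ₂·ρ_κ,q[(1−c)²ξ² + m x + p], where q = q_L = (0.3, 0.4, 0.3) if x = x_L and q = q_H = (0.5, 0.3, 0.2) if x = x_H, ξ taking the values 1, 2, 3 with these probabilities. Then Ũ(x_H) − Ũ(x_L) = m·(x_H − x_L) − (1−c)²·(1.1 + 0.07·κ·μ₂). Consequently, if m·(x_H − x_L) > (1−c)²·(1.1 + 0.07·κ·μ₂), then Ũ(x_H) > Ũ(x_L), so the insured user strictly prefers the low security investment x_L, exhibiting moral hazard. -/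
/-!
Both risk measures are translation equivariant and positively homogeneous, so the perceived cost
of `(1-c)²ξ² + m x + p` is `(1-c)²` times that of `ξ²`, plus `m x + p`. Under `q_L` one has
`E[ξ²] = 4.6` and only `ξ = 3` lies above the mean, so the semideviation is `0.3·4.4 = 1.32`;
under `q_H`, `E[ξ²] = 3.5` and the semideviation is `0.3·0.5 + 0.2·5.5 = 1.25`. The perceived
cost of `ξ²` therefore drops by `1.1 + 0.07 κ μ₂` when moving from `q_L` to `q_H`.
-/

/-- Expectation of the values `z` under the probability vector `q` on three outcomes. -/
noncomputable def expect3 (q z : Fin 3 → ℝ) : ℝ := ∑ i, q i * z i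

/-- Absolute semideviation risk measure `ρ_κ[Z] = E[Z] + κ·E[max(Z - E[Z], 0)]` under `q`. -/
noncomputable def semidev3 (κ : ℝ) (q z : Fin 3 → ℝ) : ℝ :=
  expect3 q z + κ * ∑ i, q i * max (z i - expect3 q z) 0

/-- Population-averaged perceived cost: fraction `1 - μ₂` of type θ₁ (expectation) and
fraction `μ₂` of type θ₂ (absolute semideviation with parameter `κ`). -/
noncomputable def perceivedCost3 (κ μ2 : ℝ) (q z : Fin 3 → ℝ) : ℝ :=
  (1 - μ2) * expect3 q z + μ2 * semidev3 κ q z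

/-- Loss distribution over `ξ ∈ {1,2,3}` under the low security investment `x_L`. -/
noncomputable def qLow : Fin 3 → ℝ := ![0.3, 0.4, 0.3]

/-- Loss distribution over `ξ ∈ {1,2,3}` under the high security investment `x_H`. -/
noncomputable def qHigh : Fin 3 → ℝ := ![0.5, 0.3, 0.2]

/-- Insured user's random cost at outcome `i` (loss `ξ = i + 1`): retained perceived loss
`((1-c)ξ)²`, investment cost `m·x`, and premium `p`. -/
noncomputable def insuredCost (c m x p : ℝ) : Fin 3 → ℝ :=
  fun i => (1 - c) ^ 2 * (((i : ℕ) : ℝ) + 1) ^ 2 + m * x + p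

section Equivariance

variable {q : Fin 3 → ℝ}

theorem expect3_const_mul (s : ℝ) (z : Fin 3 → ℝ) :
    expect3 q (fun i => s * z i) = s * expect3 q z := by
  simp only [expect3, Finset.mul_sum, mul_left_comm]

theorem expect3_add_const (hq : ∑ i, q i = 1) (z : Fin 3 → ℝ) (a : ℝ) :
    expect3 q (fun i => z i + a) = expect3 q z + a := by
  simp only [expect3, mul_add, Finset.sum_add_distrib, ← Finset.sum_mul, hq, one_mul]

theorem semidev3_const_mul (κ : ℝ) {s : ℝ} (hs : 0 ≤ s) (z : Fin 3 → ℝ) :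
    semidev3 κ q (fun i => s * z i) = s * semidev3 κ q z := by
  have hdev : ∀ i, max (s * z i - s * expect3 q z) 0 = s * max (z i - expect3 q z) 0 := by
    intro i
    rw [mul_max_of_nonneg _ _ hs, mul_sub, mul_zero]
  simp only [semidev3, expect3_const_mul, hdev, mul_add, Finset.mul_sum]
  ring_nf

theorem semidev3_add_const (κ : ℝ) (hq : ∑ i, q i = 1) (z : Fin 3 → ℝ) (a : ℝ) :
    semidev3 κ q (fun i => z i + a) = semidev3 κ q z + a := by
  simp only [semidev3, expect3_add_const hq, add_sub_add_right_eq_sub]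
  ring

theorem perceivedCost3_const_mul_add_const (κ μ2 : ℝ) (hq : ∑ i, q i = 1) {s : ℝ} (hs : 0 ≤ s)
    (z : Fin 3 → ℝ) (a : ℝ) :
    perceivedCost3 κ μ2 q (fun i => s * z i + a) = s * perceivedCost3 κ μ2 q z + a := by
  simp only [perceivedCost3, expect3_add_const hq (fun i => s * z i),
    semidev3_add_const κ hq (fun i => s * z i), expect3_const_mul, semidev3_const_mul κ hs]
  ring

end Equivariance

def squaredLoss : Fin 3 → ℝ := fun i => (((i : ℕ) : ℝ) + 1) ^ 2

theorem insuredCost_eq (c m x p : ℝ) :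
    insuredCost c m x p = fun i => (1 - c) ^ 2 * squaredLoss i + (m * x + p) := by
  funext i
  rw [insuredCost, squaredLoss, add_assoc]

theorem perceivedCost3_insuredCost (κ μ2 : ℝ) {q : Fin 3 → ℝ} (hq : ∑ i, q i = 1) (c m x p : ℝ) :
    perceivedCost3 κ μ2 q (insuredCost c m x p) =
      (1 - c) ^ 2 * perceivedCost3 κ μ2 q squaredLoss + (m * x + p) := by
  rw [insuredCost_eq, perceivedCost3_const_mul_add_const κ μ2 hq (sq_nonneg _)]

theorem sum_qLow : ∑ i, qLow i = 1 := by
  norm_num [qLow, Fin.sum_univ_three, Matrix.cons_val_two, Matrix.tail_cons, Matrix.head_cons]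

theorem sum_qHigh : ∑ i, qHigh i = 1 := by
  norm_num [qHigh, Fin.sum_univ_three, Matrix.cons_val_two, Matrix.tail_cons, Matrix.head_cons]

theorem expect3_qLow_squaredLoss : expect3 qLow squaredLoss = 4.6 := by
  norm_num [expect3, qLow, squaredLoss, Fin.sum_univ_three, Matrix.cons_val_two,
    Matrix.tail_cons, Matrix.head_cons]

theorem expect3_qHigh_squaredLoss : expect3 qHigh squaredLoss = 3.5 := by
  norm_num [expect3, qHigh, squaredLoss, Fin.sum_univ_three, Matrix.cons_val_two,
    Matrix.tail_cons, Matrix.head_cons]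

theorem semidev3_qLow_squaredLoss (κ : ℝ) : semidev3 κ qLow squaredLoss = 4.6 + 1.32 * κ := by
  rw [semidev3, expect3_qLow_squaredLoss]
  norm_num [qLow, squaredLoss, Fin.sum_univ_three, Matrix.cons_val_two, Matrix.tail_cons,
    Matrix.head_cons]
  ring

theorem semidev3_qHigh_squaredLoss (κ : ℝ) : semidev3 κ qHigh squaredLoss = 3.5 + 1.25 * κ := by
  rw [semidev3, expect3_qHigh_squaredLoss]
  norm_num [qHigh, squaredLoss, Fin.sum_univ_three, Matrix.cons_val_two, Matrix.tail_cons,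
    Matrix.head_cons]
  ring

theorem ransomware_moral_hazard_general
    (κ μ2 c p m xL xH : ℝ) :
    perceivedCost3 κ μ2 qHigh (insuredCost c m xH p) -
        perceivedCost3 κ μ2 qLow (insuredCost c m xL p) =
      m * (xH - xL) - (1 - c) ^ 2 * (1.1 + 0.07 * κ * μ2) ∧
    (m * (xH - xL) > (1 - c) ^ 2 * (1.1 + 0.07 * κ * μ2) →
      perceivedCost3 κ μ2 qHigh (insuredCost c m xH p) >
        perceivedCost3 κ μ2 qLow (insuredCost c m xL p)) := by
  have hdiff : perceivedCost3 κ μ2 qHigh (insuredCost c m xH p) -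
      perceivedCost3 κ μ2 qLow (insuredCost c m xL p) =
        m * (xH - xL) - (1 - c) ^ 2 * (1.1 + 0.07 * κ * μ2) := by
    rw [perceivedCost3_insuredCost κ μ2 sum_qHigh, perceivedCost3_insuredCost κ μ2 sum_qLow,
      perceivedCost3, perceivedCost3, expect3_qHigh_squaredLoss, expect3_qLow_squaredLoss,
      semidev3_qHigh_squaredLoss, semidev3_qLow_squaredLoss]
    ring
  exact ⟨hdiff, fun h => sub_pos.mp (by linarith)⟩

/-- in the ransomware case study,
`Ũ(x_H) - Ũ(x_L) = m·(x_H - x_L) - (1-c)²·(1.1 + 0.07·κ·μ₂)`; consequently, if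
`m·(x_H - x_L) > (1-c)²·(1.1 + 0.07·κ·μ₂)` then `Ũ(x_H) > Ũ(x_L)`, so the insured user
strictly prefers the low security investment `x_L` (moral hazard). -/
theorem ransomware_moral_hazard
    (κ μ2 c p m xL xH : ℝ)
    (hκ : 0 < κ) (hμ2 : μ2 ∈ Set.Icc (0 : ℝ) 1) (hc : c ∈ Set.Ioo (0 : ℝ) 1)
    (hp : 0 ≤ p) (hm : 0 < m) (hx : xL < xH) :
    perceivedCost3 κ μ2 qHigh (insuredCost c m xH p) -
        perceivedCost3 κ μ2 qLow (insuredCost c m xL p) =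
      m * (xH - xL) - (1 - c) ^ 2 * (1.1 + 0.07 * κ * μ2) ∧
    (m * (xH - xL) > (1 - c) ^ 2 * (1.1 + 0.07 * κ * μ2) →
      perceivedCost3 κ μ2 qHigh (insuredCost c m xH p) >
        perceivedCost3 κ μ2 qLow (insuredCost c m xL p)) :=
  ransomware_moral_hazard_general κ μ2 c p m xL xH
end
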